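/- Let $p\in\mathcal{P}^n_{\mathbb{K},+}[\mathbf{X}]$ with $p(\mathbf{z}) = 0$ for some $\mathbf{z}\in\mathbb{K}$. Then $t\mapsto G(tL(\mathbf{z}))$ remains bounded as $t\to+\infty$, hence $G$ is not coercive. -/

import Mathlib

open MvPolynomial Matrix BigOperators

/-- Multi-indices `α` with `|α| ≤ m`, each component bounded by `m`. -/
def MIdx (d m : ℕ) : Type := {α : Fin d → Fin (m + 1) // ∑ i, ((α i : ℕ)) ≤ m}

noncomputable instance (d m : ℕ) : Fintype (MIdx d m) := Subtype.fintype _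
instance (d m : ℕ) : DecidableEq (MIdx d m) := Subtype.instDecidableEq

/-- The monomial `X^α` associated with a multi-index. -/
noncomputable def monIdx {d m : ℕ} (α : MIdx d m) : MvPolynomial (Fin d) ℝ :=
  ∏ i, (X i) ^ ((α.1 i : ℕ))

/-- The block-diagonal polynomial-valued localizing matrix
`B(X) = diag (g_1(X) D^{n_1}(X), …, g_{j*}(X) D^{n_{j*}}(X))`,
with `D^{n_j}(X)_{αβ} = X^α X^β`. -/
noncomputable def BPoly {d js : ℕ} (g : Fin js → MvPolynomial (Fin d) ℝ)
    (nj : Fin js → ℕ) :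
    Matrix ((j : Fin js) × MIdx d (nj j)) ((j : Fin js) × MIdx d (nj j))
      (MvPolynomial (Fin d) ℝ) :=
  fun p q => if p.1 = q.1 then g p.1 * monIdx p.2 * monIdx q.2 else 0

/-- Evaluation `B(x)` of the localizing matrix at a point. -/
noncomputable def BEval {d js : ℕ} (g : Fin js → MvPolynomial (Fin d) ℝ)
    (nj : Fin js → ℕ) (x : Fin d → ℝ) :
    Matrix ((j : Fin js) × MIdx d (nj j)) ((j : Fin js) × MIdx d (nj j)) ℝ :=
  fun p q => eval x (BPoly g nj p q)


/-- `M(λ) = I + ∑ r λ_r B_r`. -/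
noncomputable def Mmat {rs : ℕ} {ι : Type*} [Fintype ι] [DecidableEq ι]
    (B : Fin rs → Matrix ι ι ℝ) (lam : Fin rs → ℝ) : Matrix ι ι ℝ :=
  1 + ∑ r, lam r • B r

/-- The dual function `G(λ) = tr(M(λ)⁻¹) + ⟨λ, y⟩`. -/
noncomputable def Gfun {rs : ℕ} {ι : Type*} [Fintype ι] [DecidableEq ι]
    (B : Fin rs → Matrix ι ι ℝ) (y : Fin rs → ℝ) (lam : Fin rs → ℝ) : ℝ :=
  (Mmat B lam)⁻¹.trace + ∑ r, y r * lam r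

/-! Since `p` and every entry of `B(X)` have degree `≤ n`, interpolation at the nodes `x_r` gives
`∑ r, L(z)_r • B(x_r) = B(z)` and `⟨L(z), y⟩ = p(z) = 0`. Along the ray `t • L(z)` the linear
term of `G` therefore vanishes and `M = 1 + t • B(z)` with `B(z) ⪰ 0`, whence
`0 ≤ tr M⁻¹ ≤ dim M`. As `∑ r, L(z)_r = 1`, the ray is unbounded, so `G` is not coercive. -/

namespace Matrix.PosSemidef

variable {ι : Type*} [Fintype ι] [DecidableEq ι] {S : Matrix ι ι ℝ}

/-- With `y = (1 + S)⁻¹ x` one has `x = y + S y`, so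
`x ⬝ x - x ⬝ y = y ⬝ S y + S y ⬝ S y ≥ 0`. -/
theorem dotProduct_inv_one_add_mulVec_le (hS : S.PosSemidef) (x : ι → ℝ) :
    x ⬝ᵥ ((1 + S)⁻¹ *ᵥ x) ≤ x ⬝ᵥ x := by
  set y := (1 + S)⁻¹ *ᵥ x
  have hx : x = y + S *ᵥ y := by
    have hunit : IsUnit (1 + S).det := (PosDef.one.add_posSemidef hS).det_pos.ne'.isUnit
    calc x = (1 + S) *ᵥ y := by rw [mulVec_mulVec, mul_nonsing_inv _ hunit, one_mulVec]
      _ = y + S *ᵥ y := by rw [add_mulVec, one_mulVec]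
  have hSy : 0 ≤ y ⬝ᵥ (S *ᵥ y) := by simpa using hS.dotProduct_mulVec_nonneg y
  have hSS : 0 ≤ (S *ᵥ y) ⬝ᵥ (S *ᵥ y) := Finset.sum_nonneg fun i _ => mul_self_nonneg _
  rw [hx]
  simp only [add_dotProduct, dotProduct_add, dotProduct_comm (S *ᵥ y) y]
  linarith

theorem abs_trace_inv_one_add_le (hS : S.PosSemidef) :
    |((1 + S)⁻¹).trace| ≤ Fintype.card ι := by
  have hinv : ((1 + S)⁻¹).PosSemidef := (PosSemidef.one.add hS).inv
  have hdiag (i : ι) : (1 + S)⁻¹ i i ≤ 1 := by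
    simpa [mulVec_single, single_dotProduct] using
      hS.dotProduct_inv_one_add_mulVec_le (Pi.single i 1)
  rw [abs_of_nonneg hinv.trace_nonneg, trace]
  simpa using Finset.sum_le_sum fun i (_ : i ∈ Finset.univ) => hdiag i

end Matrix.PosSemidef

theorem totalDegree_monIdx_le {d m : ℕ} (α : MIdx d m) : (monIdx α).totalDegree ≤ m :=
  calc (monIdx α).totalDegree
      ≤ ∑ i, ((X i : MvPolynomial (Fin d) ℝ) ^ (α.1 i : ℕ)).totalDegree :=
        totalDegree_finsetProd _ _
    _ = ∑ i, (α.1 i : ℕ) := by simp only [totalDegree_X_pow]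
    _ ≤ m := α.2

theorem totalDegree_BPoly_le {d js n : ℕ} {g : Fin js → MvPolynomial (Fin d) ℝ}
    (hgn : ∀ j, (g j).totalDegree ≤ n) {nj : Fin js → ℕ}
    (hnj : ∀ j, nj j = (n - (g j).totalDegree) / 2) (a b : (j : Fin js) × MIdx d (nj j)) :
    (BPoly g nj a b).totalDegree ≤ n := by
  unfold BPoly
  split_ifs with hab
  · obtain ⟨j, α⟩ := a
    obtain ⟨k, β⟩ := b
    obtain rfl : j = k := hab
    have hα := totalDegree_monIdx_le α
    have hβ := totalDegree_monIdx_le β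
    have hj := hnj j
    have hgj := hgn j
    calc (g j * monIdx α * monIdx β).totalDegree
        ≤ (g j).totalDegree + (monIdx α).totalDegree + (monIdx β).totalDegree :=
          (totalDegree_mul _ _).trans (add_le_add_left (totalDegree_mul _ _) _)
      _ ≤ n := by omega
  · simp

section LocalizingMatrix

variable {d js : ℕ} (g : Fin js → MvPolynomial (Fin d) ℝ) (nj : Fin js → ℕ) (z : Fin d → ℝ)

noncomputable def blockMonomialVec (j : Fin js) : (Σ k : Fin js, MIdx d (nj k)) → ℝ :=
  fun a => if a.1 = j then eval z (monIdx a.2) else 0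

theorem BEval_eq_sum_smul_vecMulVec :
    BEval g nj z = ∑ j, eval z (g j) •
      vecMulVec (blockMonomialVec nj z j) (blockMonomialVec nj z j) := by
  ext a b
  rw [Matrix.sum_apply, Finset.sum_eq_single a.1]
  · by_cases hab : a.1 = b.1
    · simp [BEval, BPoly, blockMonomialVec, vecMulVec_apply, hab, mul_assoc]
    · simp [BEval, BPoly, blockMonomialVec, vecMulVec_apply, hab, Ne.symm hab]
  · intro j _ hj
    simp [blockMonomialVec, vecMulVec_apply, Ne.symm hj]
  · simp

theorem posSemidef_BEval (hz : ∀ j, 0 ≤ eval z (g j)) : (BEval g nj z).PosSemidef := by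
  rw [BEval_eq_sum_smul_vecMulVec]
  refine posSemidef_sum _ fun j _ => PosSemidef.smul ?_ (hz j)
  simpa using posSemidef_vecMulVec_self_star (blockMonomialVec nj z j)

end LocalizingMatrix

section Interpolation

variable {d rs n : ℕ} {xr : Fin rs → Fin d → ℝ} {l : Fin rs → MvPolynomial (Fin d) ℝ}
  (huni : ∀ p : MvPolynomial (Fin d) ℝ, p.totalDegree ≤ n → p = ∑ r, C (eval (xr r) p) * l r)
include huni

theorem eval_eq_sum_eval_mul_eval_of_interpolation {q : MvPolynomial (Fin d) ℝ}
    (hq : q.totalDegree ≤ n) (z : Fin d → ℝ) :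
    eval z q = ∑ r, eval (xr r) q * eval z (l r) := by
  conv_lhs => rw [huni q hq]
  simp only [map_sum, map_mul, eval_C]

theorem sum_eval_of_interpolation_eq_one (z : Fin d → ℝ) : ∑ r, eval z (l r) = 1 := by
  simpa using (eval_eq_sum_eval_mul_eval_of_interpolation huni (q := 1) (by simp) z).symm

theorem sum_smul_BEval_of_interpolation {js : ℕ} {g : Fin js → MvPolynomial (Fin d) ℝ}
    (hgn : ∀ j, (g j).totalDegree ≤ n) {nj : Fin js → ℕ}
    (hnj : ∀ j, nj j = (n - (g j).totalDegree) / 2) (z : Fin d → ℝ) :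
    ∑ r, eval z (l r) • BEval g nj (xr r) = BEval g nj z := by
  ext a b
  rw [Matrix.sum_apply, BEval, eval_eq_sum_eval_mul_eval_of_interpolation huni
    (totalDegree_BPoly_le hgn hnj a b)]
  simp only [Matrix.smul_apply, smul_eq_mul, BEval, mul_comm]

end Interpolation

section DualFunction

variable {rs : ℕ} {ι : Type*} [Fintype ι] [DecidableEq ι] (B : Fin rs → Matrix ι ι ℝ)

theorem Mmat_smul (c : Fin rs → ℝ) (t : ℝ) : Mmat B (t • c) = 1 + t • ∑ r, c r • B r := by
  simp only [Mmat, Finset.smul_sum, Pi.smul_apply, smul_eq_mul, smul_smul]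

theorem Gfun_smul_of_sum_mul_eq_zero {y c : Fin rs → ℝ} (hyc : ∑ r, y r * c r = 0) (t : ℝ) :
    Gfun B y (t • c) = ((1 + t • ∑ r, c r • B r)⁻¹).trace := by
  have hray : ∑ r, y r * (t • c) r = 0 := by
    simp only [Pi.smul_apply, smul_eq_mul, mul_left_comm _ t, ← Finset.mul_sum, hyc, mul_zero]
  rw [Gfun, Mmat_smul, hray, add_zero]

end DualFunction

def IsCoerciveOn {E : Type*} [Norm E] (P : E → Prop) (f : E → ℝ) : Prop :=
  ∀ A : ℝ, ∃ R : ℝ, ∀ x, P x → R ≤ ‖x‖ → A ≤ f x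

theorem not_isCoerciveOn_of_bddAbove_on_ray {E : Type*} [NormedAddCommGroup E] [NormedSpace ℝ E]
    {P : E → Prop} {f : E → ℝ} {v : E} (hv : v ≠ 0) {b : ℝ} (hP : ∀ t : ℝ, 0 ≤ t → P (t • v))
    (hf : ∀ t : ℝ, 0 ≤ t → f (t • v) ≤ b) : ¬ IsCoerciveOn P f := by
  intro hcoer
  obtain ⟨R, hR⟩ := hcoer (b + 1)
  have hv' : 0 < ‖v‖ := norm_pos_iff.mpr hv
  set t := max 0 (R / ‖v‖)
  have ht : 0 ≤ t := le_max_left _ _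
  have hfar : R ≤ ‖t • v‖ := by
    rw [norm_smul, Real.norm_of_nonneg ht, ← div_le_iff₀ hv']
    exact le_max_right _ _
  linarith [hR _ (hP t ht) hfar, hf t ht]

theorem G_bounded_on_ray_and_not_coercive_if_p_vanishes_general
    (d js n rs : ℕ)
    (g : Fin js → MvPolynomial (Fin d) ℝ)
    (hgn : ∀ j, (g j).totalDegree ≤ n)
    (nj : Fin js → ℕ) (hnj : ∀ j, nj j = (n - (g j).totalDegree) / 2)
    (xr : Fin rs → Fin d → ℝ)
    (l : Fin rs → MvPolynomial (Fin d) ℝ)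
    (huni : ∀ p : MvPolynomial (Fin d) ℝ, p.totalDegree ≤ n →
      p = ∑ r, C (eval (xr r) p) * l r)
    (p : MvPolynomial (Fin d) ℝ) (hpdeg : p.totalDegree ≤ n)
    (z : Fin d → ℝ) (hz : ∀ j, 0 ≤ eval z (g j)) (hzero : eval z p = 0) :
    (∃ Cb : ℝ, ∀ t : ℝ, 0 ≤ t →
        |Gfun (fun r => BEval g nj (xr r)) (fun r => eval (xr r) p)
            (fun r => t * eval z (l r))| ≤ Cb) ∧
    ¬ (∀ A : ℝ, ∃ R : ℝ, ∀ lam : EuclideanSpace ℝ (Fin rs),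
        (Mmat (fun r => BEval g nj (xr r)) lam).PosDef → R ≤ ‖lam‖ →
          A ≤ Gfun (fun r => BEval g nj (xr r)) (fun r => eval (xr r) p) lam) := by
  set B := fun r => BEval g nj (xr r)
  set L := fun r => eval z (l r)
  have hS : (BEval g nj z).PosSemidef := posSemidef_BEval g nj z hz
  have hBL : ∑ r, L r • B r = BEval g nj z := sum_smul_BEval_of_interpolation huni hgn hnj z
  have hyL : ∑ r, eval (xr r) p * L r = 0 := by
    rw [← eval_eq_sum_eval_mul_eval_of_interpolation huni hpdeg, hzero]
  have hM (t : ℝ) : Mmat B (t • L) = 1 + t • BEval g nj z := by rw [Mmat_smul, hBL]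
  have hG (t : ℝ) :
      Gfun B (fun r => eval (xr r) p) (t • L) = ((1 + t • BEval g nj z)⁻¹).trace := by
    rw [Gfun_smul_of_sum_mul_eq_zero B hyL, hBL]
  have hbound (t : ℝ) (ht : 0 ≤ t) :
      |Gfun B (fun r => eval (xr r) p) (t • L)| ≤ Fintype.card (Σ j, MIdx d (nj j)) := by
    rw [hG]
    exact (hS.smul ht).abs_trace_inv_one_add_le
  refine ⟨⟨_, hbound⟩, not_isCoerciveOn_of_bddAbove_on_ray (v := WithLp.toLp 2 L) ?_
    (fun t ht => ?_) (fun t ht => (le_abs_self _).trans (hbound t ht))⟩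
  · intro hL
    have hL' : L = 0 := congrArg WithLp.ofLp hL
    have hsum : ∑ r, L r = 1 := sum_eval_of_interpolation_eq_one huni z
    simp [hL'] at hsum
  · change (Mmat B (t • L)).PosDef
    rw [hM]
    exact PosDef.one.add_posSemidef (hS.smul ht)

theorem G_bounded_on_ray_and_not_coercive_if_p_vanishes
    (d js n rs : ℕ)
    (g : Fin js → MvPolynomial (Fin d) ℝ)
    (hgn : ∀ j, (g j).totalDegree ≤ n)
    (nj : Fin js → ℕ) (hnj : ∀ j, nj j = (n - (g j).totalDegree) / 2)
    (xr : Fin rs → Fin d → ℝ)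
    (hxK : ∀ r, ∀ j, 0 ≤ eval (xr r) (g j))
    (l : Fin rs → MvPolynomial (Fin d) ℝ)
    (hldeg : ∀ r, (l r).totalDegree ≤ n)
    (hdelta : ∀ r s, eval (xr s) (l r) = if r = s then (1 : ℝ) else 0)
    (huni : ∀ p : MvPolynomial (Fin d) ℝ, p.totalDegree ≤ n →
      p = ∑ r, C (eval (xr r) p) * l r)
    (p : MvPolynomial (Fin d) ℝ) (hpdeg : p.totalDegree ≤ n)
    (hpos : ∀ x : Fin d → ℝ, (∀ j, 0 ≤ eval x (g j)) → 0 ≤ eval x p)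
    (z : Fin d → ℝ) (hz : ∀ j, 0 ≤ eval z (g j)) (hzero : eval z p = 0) :
    (∃ Cb : ℝ, ∀ t : ℝ, 0 ≤ t →
        |Gfun (fun r => BEval g nj (xr r)) (fun r => eval (xr r) p)
            (fun r => t * eval z (l r))| ≤ Cb) ∧
    ¬ (∀ A : ℝ, ∃ R : ℝ, ∀ lam : EuclideanSpace ℝ (Fin rs),
        (Mmat (fun r => BEval g nj (xr r)) lam).PosDef → R ≤ ‖lam‖ →
          A ≤ Gfun (fun r => BEval g nj (xr r)) (fun r => eval (xr r) p) lam) :=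
  G_bounded_on_ray_and_not_coercive_if_p_vanishes_general d js n rs g hgn nj hnj xr l huni p hpdeg z
    hz hzero
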